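/- Let 𝔠 : C ⥤ B be a functor and let p : P ⟶ Q be a morphism in C lying over f : A ⟶ B. Then p is cocartesian if and only if for every object R in the fiber over B, composition with p induces a bijection from morphisms Q ⟶ R in the fiber over B to morphisms P ⟶ R lying over f — provided 𝔠 is a fibration. -/

import Mathlib

/-!
Every cocartesian morphism `p : P ⟶ Q` over `f` of a fibration is strongly cocartesian. Given
`φ' : P ⟶ b'` over `f ≫ g`, choose a cartesian lift `χ : R ⟶ b'` of `g`; it is strongly
cartesian since `𝔠` is fibered. Then `φ'` factors as `τ ≫ χ` with `τ` over `f`, the cocartesian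
property of `p` factors `τ` as `p ≫ r` with `r` vertical, and `r ≫ χ` is the required lift of `g`.
Uniqueness follows in the same way, factoring any other lift of `g` through `χ`.
-/

open CategoryTheory Functor Category

namespace CategoryTheory.Functor

variable {𝒮 𝒞 : Type*} [Category 𝒮] [Category 𝒞] (𝔠 : 𝒞 ⥤ 𝒮)

lemma isCocartesian_iff_bijective_comp {A B : 𝒮} {P Q : 𝒞} (f : A ⟶ B) (p : P ⟶ Q)
    [𝔠.IsHomLift f p] :
    𝔠.IsCocartesian f p ↔
      ∀ (R : 𝒞), 𝔠.obj R = B →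
        Function.Bijective (fun r : {r : Q ⟶ R // 𝔠.IsHomLift (𝟙 B) r} =>
          (⟨p ≫ r.1, by have := r.2; infer_instance⟩ :
            {s : P ⟶ R // 𝔠.IsHomLift f s})) := by
  constructor
  · intro _ R _
    constructor
    · rintro ⟨r₁, _⟩ ⟨r₂, _⟩ h
      exact Subtype.ext (IsCocartesian.ext 𝔠 f p r₁ r₂ (congrArg Subtype.val h))
    · rintro ⟨s, _⟩
      exact ⟨⟨IsCocartesian.map 𝔠 f p s, inferInstance⟩, Subtype.ext (IsCocartesian.fac 𝔠 f p s)⟩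
  · intro h
    refine ⟨fun {R} φ _ ↦ ?_⟩
    obtain ⟨⟨r, _⟩, hr, huniq⟩ :=
      (h R (IsHomLift.codomain_eq 𝔠 f φ)).existsUnique ⟨φ, inferInstance⟩
    refine ⟨r, ⟨inferInstance, congrArg Subtype.val hr⟩, fun r' ⟨_, hr'⟩ ↦ ?_⟩
    exact congrArg Subtype.val (huniq ⟨r', inferInstance⟩ (Subtype.ext hr'))

lemma IsFibered.isStronglyCocartesian_of_isCocartesian [𝔠.IsFibered] {A B : 𝒮} {P Q : 𝒞}
    (f : A ⟶ B) (p : P ⟶ Q) [𝔠.IsCocartesian f p] : 𝔠.IsStronglyCocartesian f p where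
  universal_property' {b'} g φ' _ := by
    let χ := IsPreFibered.pullbackMap (p := 𝔠) rfl g
    let τ := IsStronglyCartesian.map 𝔠 g χ (f' := f ≫ g) rfl φ'
    let r := IsCocartesian.map 𝔠 f p τ
    refine ⟨r ≫ χ, ⟨IsHomLift.comp_lift_id_left' 𝔠 B r g χ, ?_⟩, ?_⟩
    · rw [IsCocartesian.fac_assoc, IsStronglyCartesian.fac]
    · rintro π ⟨_, hπ⟩
      let r' := IsStronglyCartesian.map 𝔠 g χ (id_comp g).symm π
      have hr' : p ≫ r' = τ := by
        apply IsStronglyCartesian.map_uniq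
        rw [assoc, IsStronglyCartesian.fac, hπ]
      calc π = r' ≫ χ := (IsStronglyCartesian.fac 𝔠 g χ _ π).symm
        _ = r ≫ χ := by rw [IsCocartesian.map_uniq 𝔠 f p τ r' hr']

end CategoryTheory.Functor

/-- For a fibration `𝔠`, a morphism `p : P ⟶ Q` over `f : A ⟶ B` is cocartesian iff for every
object `R` in the fiber over `B`, composition with `p` gives a bijection from vertical morphisms
`Q ⟶ R` to morphisms `P ⟶ R` over `f`. -/
theorem stmt5 {𝒮 𝒞 : Type*} [Category 𝒮] [Category 𝒞] (𝔠 : 𝒞 ⥤ 𝒮) [𝔠.IsFibered]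
    {A B : 𝒮} {P Q : 𝒞} (f : A ⟶ B) (p : P ⟶ Q) [𝔠.IsHomLift f p] :
    𝔠.IsStronglyCocartesian f p ↔
      ∀ (R : 𝒞), 𝔠.obj R = B →
        Function.Bijective (fun r : {r : Q ⟶ R // 𝔠.IsHomLift (𝟙 B) r} =>
          (⟨p ≫ r.1, by haveI := r.2; infer_instance⟩ :
            {s : P ⟶ R // 𝔠.IsHomLift f s})) :=
  ⟨fun _ ↦ (isCocartesian_iff_bijective_comp 𝔠 f p).mp inferInstance,
    fun h ↦ have := (isCocartesian_iff_bijective_comp 𝔠 f p).mpr h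
      IsFibered.isStronglyCocartesian_of_isCocartesian 𝔠 f p⟩
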